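/- For a 3-dimensional Lie algebra with structure constants of the form C^k_{ij} = ε_{ijl}B^{lk} + δ^k_j a_i − δ^k_i a_j, where B is a symmetric 3×3 matrix and a a vector, the Jacobi identity holds if and only if B^{ij}a_j = 0. -/
import Mathlib


open Finset

set_option maxHeartbeats 1000000

/-- For a bracket on `ℝ³` with structure constants
`C^k_{ij} = ε_{ijl}B^{lk} + δ^k_j a_i − δ^k_i a_j`, where `B` is a symmetric
`3×3` matrix and `a` a vector, the Jacobi identity (checked on the standard
basis vectors) holds if and only if `B^{ij}a_j = 0`. -/
theorem jacobi_iff_Ba_eq_zero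
    (B : Matrix (Fin 3) (Fin 3) ℝ) (hB : B.IsSymm) (a : Fin 3 → ℝ)
    -- the Levi-Civita symbol on `Fin 3`
    (ε : Fin 3 → Fin 3 → Fin 3 → ℝ)
    (hε : ∀ i j k : Fin 3, ε i j k =
      (((j : ℝ) - (i : ℝ)) * ((k : ℝ) - (j : ℝ)) * ((k : ℝ) - (i : ℝ))) / 2)
    -- the structure constants
    (C : Fin 3 → Fin 3 → Fin 3 → ℝ)
    (hC : ∀ k i j : Fin 3, C k i j =
      (∑ l : Fin 3, ε i j l * B l k) +
        (if k = j then a i else 0) - (if k = i then a j else 0))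
    -- the bracket determined by the structure constants
    (br : (Fin 3 → ℝ) → (Fin 3 → ℝ) → (Fin 3 → ℝ))
    (hbr : ∀ (x y : Fin 3 → ℝ) (k : Fin 3),
      br x y k = ∑ i : Fin 3, ∑ j : Fin 3, x i * y j * C k i j)
    (e : Fin 3 → Fin 3 → ℝ) (he : ∀ i, e i = Pi.single i 1) :
    (∀ i j k : Fin 3,
        br (br (e i) (e j)) (e k) + br (br (e j) (e k)) (e i) +
          br (br (e k) (e i)) (e j) = 0) ↔
      (∀ i : Fin 3, ∑ j : Fin 3, B i j * a j = 0) := by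
  have h10 : B 1 0 = B 0 1 := hB.apply 0 1
  have h20 : B 2 0 = B 0 2 := hB.apply 0 2
  have h21 : B 2 1 = B 1 2 := hB.apply 1 2
  have c000 : C 0 0 0 = 0 := by
    rw [hC, Fin.sum_univ_three, hε, hε, hε]; norm_num [Fin.ext_iff, h10, h20, h21]
  have c001 : C 0 0 1 = B 0 2 - a 1 := by
    rw [hC, Fin.sum_univ_three, hε, hε, hε]; norm_num [Fin.ext_iff, h10, h20, h21]
  have c002 : C 0 0 2 = -B 0 1 - a 2 := by
    rw [hC, Fin.sum_univ_three, hε, hε, hε]; norm_num [Fin.ext_iff, h10, h20, h21]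
  have c010 : C 0 1 0 = -B 0 2 + a 1 := by
    rw [hC, Fin.sum_univ_three, hε, hε, hε]; norm_num [Fin.ext_iff, h10, h20, h21]
  have c011 : C 0 1 1 = 0 := by
    rw [hC, Fin.sum_univ_three, hε, hε, hε]; norm_num [Fin.ext_iff, h10, h20, h21]
  have c012 : C 0 1 2 = B 0 0 := by
    rw [hC, Fin.sum_univ_three, hε, hε, hε]; norm_num [Fin.ext_iff, h10, h20, h21]
  have c020 : C 0 2 0 = B 0 1 + a 2 := by
    rw [hC, Fin.sum_univ_three, hε, hε, hε]; norm_num [Fin.ext_iff, h10, h20, h21]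
  have c021 : C 0 2 1 = -B 0 0 := by
    rw [hC, Fin.sum_univ_three, hε, hε, hε]; norm_num [Fin.ext_iff, h10, h20, h21]
  have c022 : C 0 2 2 = 0 := by
    rw [hC, Fin.sum_univ_three, hε, hε, hε]; norm_num [Fin.ext_iff, h10, h20, h21]
  have c100 : C 1 0 0 = 0 := by
    rw [hC, Fin.sum_univ_three, hε, hε, hε]; norm_num [Fin.ext_iff, h10, h20, h21]
  have c101 : C 1 0 1 = B 1 2 + a 0 := by
    rw [hC, Fin.sum_univ_three, hε, hε, hε]; norm_num [Fin.ext_iff, h10, h20, h21]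
  have c102 : C 1 0 2 = -B 1 1 := by
    rw [hC, Fin.sum_univ_three, hε, hε, hε]; norm_num [Fin.ext_iff, h10, h20, h21]
  have c110 : C 1 1 0 = -B 1 2 - a 0 := by
    rw [hC, Fin.sum_univ_three, hε, hε, hε]; norm_num [Fin.ext_iff, h10, h20, h21]
  have c111 : C 1 1 1 = 0 := by
    rw [hC, Fin.sum_univ_three, hε, hε, hε]; norm_num [Fin.ext_iff, h10, h20, h21]
  have c112 : C 1 1 2 = B 0 1 - a 2 := by
    rw [hC, Fin.sum_univ_three, hε, hε, hε]; norm_num [Fin.ext_iff, h10, h20, h21]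
  have c120 : C 1 2 0 = B 1 1 := by
    rw [hC, Fin.sum_univ_three, hε, hε, hε]; norm_num [Fin.ext_iff, h10, h20, h21]
  have c121 : C 1 2 1 = -B 0 1 + a 2 := by
    rw [hC, Fin.sum_univ_three, hε, hε, hε]; norm_num [Fin.ext_iff, h10, h20, h21]
  have c122 : C 1 2 2 = 0 := by
    rw [hC, Fin.sum_univ_three, hε, hε, hε]; norm_num [Fin.ext_iff, h10, h20, h21]
  have c200 : C 2 0 0 = 0 := by
    rw [hC, Fin.sum_univ_three, hε, hε, hε]; norm_num [Fin.ext_iff, h10, h20, h21]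
  have c201 : C 2 0 1 = B 2 2 := by
    rw [hC, Fin.sum_univ_three, hε, hε, hε]; norm_num [Fin.ext_iff, h10, h20, h21]
  have c202 : C 2 0 2 = -B 1 2 + a 0 := by
    rw [hC, Fin.sum_univ_three, hε, hε, hε]; norm_num [Fin.ext_iff, h10, h20, h21]
  have c210 : C 2 1 0 = -B 2 2 := by
    rw [hC, Fin.sum_univ_three, hε, hε, hε]; norm_num [Fin.ext_iff, h10, h20, h21]
  have c211 : C 2 1 1 = 0 := by
    rw [hC, Fin.sum_univ_three, hε, hε, hε]; norm_num [Fin.ext_iff, h10, h20, h21]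
  have c212 : C 2 1 2 = B 0 2 + a 1 := by
    rw [hC, Fin.sum_univ_three, hε, hε, hε]; norm_num [Fin.ext_iff, h10, h20, h21]
  have c220 : C 2 2 0 = B 1 2 - a 0 := by
    rw [hC, Fin.sum_univ_three, hε, hε, hε]; norm_num [Fin.ext_iff, h10, h20, h21]
  have c221 : C 2 2 1 = -B 0 2 - a 1 := by
    rw [hC, Fin.sum_univ_three, hε, hε, hε]; norm_num [Fin.ext_iff, h10, h20, h21]
  have c222 : C 2 2 2 = 0 := by
    rw [hC, Fin.sum_univ_three, hε, hε, hε]; norm_num [Fin.ext_iff, h10, h20, h21]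
  have hbe : ∀ i j : Fin 3, br (e i) (e j) = fun p => C p i j := by
    intro i j
    funext p
    rw [hbr]
    simp [he, Pi.single_apply, ite_mul, zero_mul, one_mul,
      Finset.sum_ite_eq, Finset.sum_ite_eq']
  have hbx : ∀ (x : Fin 3 → ℝ) (k m : Fin 3),
      br x (e k) m = ∑ p : Fin 3, x p * C m p k := by
    intro x k m
    rw [hbr]
    refine Finset.sum_congr rfl fun p _ => ?_
    simp [he, Pi.single_apply, mul_ite, ite_mul, zero_mul, mul_zero, one_mul,
      Finset.sum_ite_eq, Finset.sum_ite_eq']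
  have hfin : ∀ i : Fin 3, i = 0 ∨ i = 1 ∨ i = 2 := by decide
  have key : ∀ i j k m : Fin 3,
      br (br (e i) (e j)) (e k) m + br (br (e j) (e k)) (e i) m +
        br (br (e k) (e i)) (e j) m =
      2 * ε i j k * ∑ n : Fin 3, B m n * a n := by
    intro i j k m
    rw [hbe i j, hbe j k, hbe k i, hbx, hbx, hbx, hε, Fin.sum_univ_three,
      Fin.sum_univ_three, Fin.sum_univ_three, Fin.sum_univ_three]
    rcases hfin i with rfl | rfl | rfl <;> rcases hfin j with rfl | rfl | rfl <;>
      rcases hfin k with rfl | rfl | rfl <;> rcases hfin m with rfl | rfl | rfl <;>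
      simp only [c000, c001, c002, c010, c011, c012, c020, c021, c022, c100, c101, c102, c110, c111, c112, c120, c121, c122, c200, c201, c202, c210, c211, c212, c220, c221, c222, h10, h20, h21] <;> norm_num <;> ring
  constructor
  · intro h i
    have h0 : br (br (e 0) (e 1)) (e 2) i + br (br (e 1) (e 2)) (e 0) i +
        br (br (e 2) (e 0)) (e 1) i = 0 := by
      have := congrFun (h 0 1 2) i
      simpa using this
    rw [key 0 1 2 i, hε] at h0
    norm_num at h0
    linarith
  · intro h i j k
    funext m
    simp only [Pi.add_apply, Pi.zero_apply]
    rw [key i j k m, h m]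
    ring
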